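/- arXiv:1809.01308 — 9 statements merged into one kernel-verified Lean document; each statement's English description precedes it below -/
import Mathlib

section
/- Let τ > 2c_c/c_p + 1 and 0 < c_p ≤ c_c < c_p(τ−1)/2. If T is a local net-tree with parameters (τ, c_p, c_c), then T satisfies the (global) net-tree packing property with packing constant (c_p(τ−1) − 2c_c)/(2(τ−1)) and covering property with covering constant c_c·τ/(τ−1): for every node p^ℓ, B(p, c'_p·τ^ℓ) ∩ P ⊆ P_{p^ℓ} and P_{p^ℓ} ⊆ B(p, c'_c·τ^ℓ), where c'_p = (c_p(τ−1)−2c_c)/(2(τ−1)) and c'_c = c_c·τ/(τ−1). -/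
/-- One edge step up the tree: from a node `(q, m)` to its parent `(par q m, m + 1)`. -/
def NTStep {M : Type*} (T : M → ℤ → Prop) (par : M → ℤ → M) (a b : M × ℤ) : Prop :=
  T a.1 a.2 ∧ b = (par a.1 a.2, a.2 + 1)

/-- The leaf points `P_{p^ℓ}` of the subtree rooted at the node `p^ℓ`: points of `P`
having a node that reaches `(p, ℓ)` by repeatedly taking parents. -/
def subtreePts {M : Type*} (P : Set M) (T : M → ℤ → Prop) (par : M → ℤ → M)
    (p : M) (ℓ : ℤ) : Set M :=
  {x | x ∈ P ∧ ∃ m : ℤ, T x m ∧ Relation.ReflTransGen (NTStep T par) (x, m) (p, ℓ)}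

/-- A local net-tree with parameters `(τ, c_p, c_c)`, where `τ > 2c_c/c_p + 1` and
`0 < c_p ≤ c_c < c_p(τ-1)/2`, satisfies the global net-tree packing property with
constant `(c_p(τ-1) - 2c_c)/(2(τ-1))` and covering property with constant `c_c·τ/(τ-1)`. -/
theorem local_nettree_is_nettree
    {M : Type*} [MetricSpace M] (P : Set M)
    (τ c_p c_c : ℝ)
    (hτ : 2 * c_c / c_p + 1 < τ)
    (hcp : 0 < c_p) (hcpc : c_p ≤ c_c) (hcc : c_c < c_p * (τ - 1) / 2)
    (T : M → ℤ → Prop) (par : M → ℤ → M)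
    -- nodes are associated to points of `P`
    (hTP : ∀ p ℓ, T p ℓ → p ∈ P)
    -- every point of `P` has nodes at arbitrarily low levels (leaves at level -∞)
    (hleaf : ∀ x ∈ P, ∀ ℓ : ℤ, ∃ m ≤ ℓ, T x m)
    -- nesting: each node has a child with the same associated point
    (hnest : ∀ p ℓ, T p ℓ → T p (ℓ - 1))
    -- the parent of the node `q^m` is the node `(par q m)^(m+1)`
    (hpar : ∀ q m, T q m → T (par q m) (m + 1))
    -- local covering
    (hcov : ∀ q m, T q m → dist (par q m) q ≤ c_c * τ ^ (m + 1))
    -- local parent: the parent is a closest node at level `m+1`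
    (hparmin : ∀ q m, T q m → ∀ r, T r (m + 1) → dist (par q m) q ≤ dist r q)
    -- local packing: distinct points appearing at level `≥ ℓ` are `> c_p·τ^ℓ` apart
    (hpack : ∀ (ℓ : ℤ) (p q : M), T p ℓ → T q ℓ → p ≠ q → c_p * τ ^ ℓ < dist p q)
    -- a node `p^ℓ` of the tree
    (p : M) (ℓ : ℤ) (hnode : T p ℓ) :
    (∀ x ∈ P, dist p x ≤ ((c_p * (τ - 1) - 2 * c_c) / (2 * (τ - 1))) * τ ^ ℓ →
        x ∈ subtreePts P T par p ℓ) ∧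
    (∀ x ∈ subtreePts P T par p ℓ, dist p x ≤ (c_c * τ / (τ - 1)) * τ ^ ℓ) := by
  have hcc0 : 0 < c_c := lt_of_lt_of_le hcp hcpc
  have hτ1 : 1 < τ := by
    have h : 0 ≤ 2 * c_c / c_p := by positivity
    linarith
  have hτ0 : (0:ℝ) < τ := by linarith
  have hτne : τ ≠ 0 := ne_of_gt hτ0
  have h4 : (0:ℝ) < τ - 1 := by linarith
  -- chain distance bound
  have key : ∀ a b : M × ℤ, Relation.ReflTransGen (NTStep T par) a b →
      a.2 ≤ b.2 ∧ dist b.1 a.1 ≤ c_c * (τ ^ (b.2 + 1) - τ ^ (a.2 + 1)) / (τ - 1) := by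
    intro a b h
    induction h with
    | refl => simp
    | tail h' hstep ih =>
      rename_i b c
      obtain ⟨hTb, hc⟩ := hstep
      obtain ⟨hle, hd⟩ := ih
      subst hc
      refine ⟨by simp; omega, ?_⟩
      have h1 : dist (par b.1 b.2) a.1 ≤ dist (par b.1 b.2) b.1 + dist b.1 a.1 :=
        dist_triangle _ _ _
      have h2 : dist (par b.1 b.2) b.1 ≤ c_c * τ ^ (b.2 + 1) := hcov _ _ hTb
      have h3 : τ ^ (b.2 + 1 + 1) = τ ^ (b.2 + 1) * τ := by
        rw [zpow_add_one₀ hτne]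
      rw [le_div_iff₀ h4] at hd
      show dist (par b.1 b.2) a.1 ≤ c_c * (τ ^ (b.2 + 1 + 1) - τ ^ (a.2 + 1)) / (τ - 1)
      rw [le_div_iff₀ h4, h3]
      nlinarith [mul_le_mul_of_nonneg_right h1 (le_of_lt h4),
        mul_le_mul_of_nonneg_right h2 (le_of_lt h4)]
  -- climbing lemma
  have climb : ∀ n : ℕ, ∀ x, ∀ m : ℤ, T x m → ∃ y, T y (m + n) ∧
      Relation.ReflTransGen (NTStep T par) (x, m) (y, m + n) := by
    intro n
    induction n with
    | zero =>
      intro x m hx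
      exact ⟨x, by simpa using hx, by simpa using Relation.ReflTransGen.refl⟩
    | succ k ih =>
      intro x m hx
      obtain ⟨y, hy, hchain⟩ := ih x m hx
      have hcast : m + ((k:ℤ)) + 1 = m + ((k+1 : ℕ) : ℤ) := by push_cast; ring
      refine ⟨par y (m + k), by rw [← hcast]; exact hpar y (m + k) hy, ?_⟩
      have hstep : NTStep T par (y, m + (k:ℤ)) (par y (m + k), (m + (k:ℤ)) + 1) := ⟨hy, rfl⟩
      rw [hcast] at hstep
      exact hchain.tail hstep
  have hpow : (0:ℝ) < τ ^ ℓ := zpow_pos hτ0 ℓ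
  constructor
  · -- packing
    intro x hxP hdx
    obtain ⟨m, hm, hTx⟩ := hleaf x hxP (ℓ - 1)
    obtain ⟨y, hTy, hchain⟩ := climb (ℓ - 1 - m).toNat x m hTx
    have hml : (m + ((ℓ - 1 - m).toNat : ℤ)) = ℓ - 1 := by omega
    rw [hml] at hTy hchain
    obtain ⟨-, hd⟩ := key _ _ hchain
    simp only at hd
    have h5 : (0:ℝ) < τ ^ (m + 1) := zpow_pos hτ0 _
    have hd' : dist y x ≤ c_c * τ ^ ℓ / (τ - 1) := by
      have h6 : ℓ - 1 + 1 = ℓ := by ring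
      rw [h6] at hd
      calc dist y x ≤ c_c * (τ ^ ℓ - τ ^ (m + 1)) / (τ - 1) := hd
        _ ≤ c_c * τ ^ ℓ / (τ - 1) := by
            rw [div_le_div_iff₀ h4 h4]
            nlinarith [mul_pos hcc0 h5]
    have hTq : T (par y (ℓ - 1)) ℓ := by
      have h := hpar y (ℓ - 1) hTy
      rwa [sub_add_cancel] at h
    have hqy : dist (par y (ℓ - 1)) y ≤ dist p y := by
      have hp' : T p (ℓ - 1 + 1) := by rwa [sub_add_cancel]
      exact hparmin y (ℓ - 1) hTy p hp'
    have hpy : dist p y ≤ dist p x + dist x y := dist_triangle _ _ _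
    have hxy : dist x y = dist y x := dist_comm x y
    have heq : par y (ℓ - 1) = p := by
      by_contra hne
      have hlt := hpack ℓ p (par y (ℓ - 1)) hnode hTq (fun h => hne h.symm)
      have htr : dist p (par y (ℓ - 1)) ≤ dist p y + dist (par y (ℓ - 1)) y := by
        rw [dist_comm (par y (ℓ - 1)) y]; exact dist_triangle _ _ _
      have e1 : (c_p * (τ - 1) - 2 * c_c) / (2 * (τ - 1)) * τ ^ ℓ +
          c_c * τ ^ ℓ / (τ - 1) = c_p * τ ^ ℓ / 2 := by
        field_simp
        ring
      linarith
    refine ⟨hxP, m, hTx, ?_⟩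
    have hstep : NTStep T par (y, ℓ - 1) (par y (ℓ - 1), ℓ - 1 + 1) := ⟨hTy, rfl⟩
    rw [heq, sub_add_cancel] at hstep
    exact hchain.tail hstep
  · -- covering
    intro x hx
    obtain ⟨hxP, m, hTx, hchain⟩ := hx
    obtain ⟨-, hd⟩ := key _ _ hchain
    simp only at hd
    have h5 : (0:ℝ) < τ ^ (m + 1) := zpow_pos hτ0 _
    have h6 : τ ^ (ℓ + 1) = τ * τ ^ ℓ := by
      rw [zpow_add_one₀ hτne]; ring
    calc dist p x ≤ c_c * (τ ^ (ℓ + 1) - τ ^ (m + 1)) / (τ - 1) := hd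
      _ ≤ c_c * τ / (τ - 1) * τ ^ ℓ := by
          rw [h6, div_mul_eq_mul_div, div_le_div_iff₀ h4 h4]
          nlinarith [mul_pos hcc0 h5]
end

section
/- In a semi-compressed local net-tree T ∈ LNT(τ, c_p, c_c) with relative constant c_r ≥ 2c_c·τ/(τ−1), if p^ℓ and q^ℓ are relatives (i.e., d(p,q) ≤ c_r·τ^ℓ), then their parents are both at level ℓ+1 and are relatives: d(parent(p^ℓ), parent(q^ℓ)) ≤ c_r·τ^(ℓ+1). -/
/-- In a semi-compressed local net-tree with `c_r ≥ 2c_c·τ/(τ-1)`, if `p^ℓ` and `q^ℓ`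
are relatives (`d(p,q) ≤ c_r·τ^ℓ`), then their parents `x^(ℓ+1)` and `y^(ℓ+1)`
(which satisfy the local covering bound `d(·, child) ≤ c_c·τ^(ℓ+1)`) are relatives:
`d(x,y) ≤ c_r·τ^(ℓ+1)`. -/
theorem parents_of_relatives_are_relatives {M : Type*} [MetricSpace M]
    (τ c_c c_r : ℝ) (hτ : 1 < τ) (hcc : 0 ≤ c_c)
    (hcr : 2 * c_c * τ / (τ - 1) ≤ c_r)
    (p q x y : M) (ℓ : ℤ)
    (hxp : dist x p ≤ c_c * τ ^ (ℓ + 1))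
    (hyq : dist y q ≤ c_c * τ ^ (ℓ + 1))
    (hrel : dist p q ≤ c_r * τ ^ ℓ) :
    dist x y ≤ c_r * τ ^ (ℓ + 1) := by
  have hτ0 : (0:ℝ) < τ := by linarith
  have hτ1 : (0:ℝ) < τ - 1 := by linarith
  have hpow : (0:ℝ) < τ ^ ℓ := zpow_pos hτ0 ℓ
  have hkey : 2 * c_c * τ ≤ c_r * (τ - 1) := by
    have := (div_le_iff₀ hτ1).mp hcr
    linarith
  have hmul : (2 * c_c * τ) * τ ^ ℓ ≤ (c_r * (τ - 1)) * τ ^ ℓ :=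
    mul_le_mul_of_nonneg_right hkey hpow.le
  have hz : τ ^ (ℓ + 1) = τ ^ ℓ * τ := by
    rw [zpow_add_one₀ (ne_of_gt hτ0)]
  have htri : dist x y ≤ dist x p + dist p q + dist q y := dist_triangle4 x p q y
  rw [dist_comm q y] at htri
  rw [hz] at hxp hyq ⊢
  nlinarith [hpow.le]
end

section
/- Let T be a local net-tree with parameters (τ, c_p, c_c) and relative constant c_r > c_c·τ/(τ−1) on a point set P in a metric space M. For any q ∈ M, if the center of q is a node p^ℓ (the node minimizing (d(q,·), level) lexicographically among nodes x^m with d(q,x) ≤ c_r·τ^m), then d(p, q) < (c_r·τ(τ−1)/(c_r(τ−1) − c_c·τ)) · d(q, P), i.e., p is a (c_rτ(τ−1)/(c_r(τ−1)−c_cτ))-approximate nearest neighbor of q in P. -/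
/-!
Let `δ = d(q, P) > 0` and `a = c_r - c_c τ/(τ-1) > 0`, and pick the level `k` with
`a τ^(k-1) < δ ≤ a τ^k`. The covering property puts a point `y ∈ N_k` within
`c_c τ^(k+1)/(τ-1) = (c_r - a) τ^k` of a nearest neighbour of `q`, so
`d(q, y) ≤ δ + (c_r - a) τ^k ≤ c_r τ^k` and the node `y^k` competes for the center.
Hence `d(q, p) ≤ d(q, y) ≤ c_r τ^k < c_r τ δ / a`, and `c_r τ / a` is the stated constant.
-/

open Metric

theorem IsCompact.exists_mem_dist_le_infDist_add {M : Type*} [MetricSpace M] {P N : Set M}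
    (hP : IsCompact P) (hPne : P.Nonempty) {r : ℝ} (hcov : ∀ x ∈ P, ∃ y ∈ N, dist x y ≤ r)
    (q : M) : ∃ y ∈ N, dist q y ≤ infDist q P + r := by
  obtain ⟨x, hxP, hqx⟩ := hP.exists_infDist_eq_dist hPne q
  obtain ⟨y, hyN, hxy⟩ := hcov x hxP
  exact ⟨y, hyN, by linarith [dist_triangle q x y]⟩

theorem center_is_ANN_general {M : Type*} [MetricSpace M]
    (τ c_c c_r : ℝ) (hτ : 1 < τ) (hcc : 0 < c_c)
    (hcr : c_c * τ / (τ - 1) < c_r)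
    (P : Set M) (hPfin : P.Finite) (hPne : P.Nonempty)
    (T : M → ℤ → Prop)
    -- Hausdorff covering: every point of `P` is within `c_c·τ^m/(τ-1)` of `N_{m-1}`
    (hH : ∀ (m : ℤ), ∀ x ∈ P, ∃ y, T y (m - 1) ∧ dist x y ≤ c_c * τ ^ m / (τ - 1))
    (q : M) (hq : q ∉ P)
    (p : M) (ℓ : ℤ)
    -- `p^ℓ` is the center of `q`
    (hmin : ∀ x (m : ℤ), T x m → dist q x ≤ c_r * τ ^ m →
      dist q p < dist q x ∨ (dist q p = dist q x ∧ ℓ ≤ m)) :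
    dist p q < (c_r * τ * (τ - 1) / (c_r * (τ - 1) - c_c * τ)) * Metric.infDist q P := by
  set δ := infDist q P
  set a := c_r - c_c * τ / (τ - 1)
  have hτ1 : 0 < τ - 1 := sub_pos.2 hτ
  have ha : 0 < a := sub_pos.2 hcr
  have hcr0 : 0 < c_r := (div_pos (mul_pos hcc (by linarith)) hτ1).trans hcr
  have hδ : 0 < δ := (hPfin.isClosed.notMem_iff_infDist_pos hPne).mp hq
  obtain ⟨n, hn_lt, hn_le⟩ := exists_mem_Ioc_zpow (div_pos hδ ha) hτ
  obtain ⟨y, hy, hqy⟩ := hPfin.isCompact.exists_mem_dist_le_infDist_add hPne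
    (N := {y | T y (n + 1)}) (fun x hx => by simpa using hH (n + 1 + 1) x hx) q
  have hcand : dist q y ≤ c_r * τ ^ (n + 1) := by
    have hδ_le : δ ≤ a * τ ^ (n + 1) := (div_le_iff₀' ha).1 hn_le
    calc dist q y ≤ δ + c_c * τ ^ (n + 1 + 1) / (τ - 1) := hqy
      _ = δ + (c_r - a) * τ ^ (n + 1) := by
        rw [zpow_add_one₀ (by positivity : τ ≠ 0) (n + 1)]; ring
      _ ≤ c_r * τ ^ (n + 1) := by linarith
  have hqp : dist q p ≤ dist q y := by
    rcases hmin y _ hy hcand with h | ⟨h, -⟩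
    exacts [h.le, h.le]
  calc dist p q ≤ c_r * τ ^ (n + 1) := (dist_comm p q).trans_le (hqp.trans hcand)
    _ = c_r * τ * τ ^ n := by rw [zpow_add_one₀ (by positivity : τ ≠ 0)]; ring
    _ < c_r * τ * (δ / a) := mul_lt_mul_of_pos_left hn_lt (by positivity)
    _ = c_r * τ * (τ - 1) / (c_r * (τ - 1) - c_c * τ) * δ := by
      simp only [a]; field_simp

/-- If the center of a query point `q ∉ P` in a local net-tree (with relative constant
`c_r > c_c·τ/(τ-1)`) is the node `p^ℓ`, then `p` is a
`(c_r·τ(τ-1)/(c_r(τ-1) - c_c·τ))`-approximate nearest neighbor of `q` in `P`.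
Here `T x m` means the point `x` has a node spanning level `m` (so `x ∈ N_m`),
the center minimizes `(d(q,·), level)` lexicographically among nodes `x^m` with
`d(q,x) ≤ c_r·τ^m`, and the covering property gives `d_H(N_{m-1}, P) ≤ c_c·τ^m/(τ-1)`. -/
theorem center_is_ANN {M : Type*} [MetricSpace M]
    (τ c_c c_r : ℝ) (hτ : 1 < τ) (hcc : 0 < c_c)
    (hcr : c_c * τ / (τ - 1) < c_r)
    (P : Set M) (hPfin : P.Finite) (hPne : P.Nonempty)
    (T : M → ℤ → Prop)
    (hTP : ∀ x m, T x m → x ∈ P)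
    -- `N_m` is downward closed: a point at level `≥ m` is at level `≥ m'` for `m' ≤ m`
    (hdown : ∀ x (m m' : ℤ), m' ≤ m → T x m → T x m')
    -- every point of `P` appears in some level
    (hsome : ∀ x ∈ P, ∃ m : ℤ, T x m)
    -- Hausdorff covering: every point of `P` is within `c_c·τ^m/(τ-1)` of `N_{m-1}`
    (hH : ∀ (m : ℤ), ∀ x ∈ P, ∃ y, T y (m - 1) ∧ dist x y ≤ c_c * τ ^ m / (τ - 1))
    (q : M) (hq : q ∉ P)
    (p : M) (ℓ : ℤ)
    -- `p^ℓ` is the center of `q`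
    (hnode : T p ℓ) (hin : dist q p ≤ c_r * τ ^ ℓ)
    (hmin : ∀ x (m : ℤ), T x m → dist q x ≤ c_r * τ ^ m →
      dist q p < dist q x ∨ (dist q p = dist q x ∧ ℓ ≤ m)) :
    dist p q < (c_r * τ * (τ - 1) / (c_r * (τ - 1) - c_c * τ)) * Metric.infDist q P :=
  center_is_ANN_general τ c_c c_r hτ hcc hcr P hPfin hPne T hH q hq p ℓ hmin
end

section
/- In a semi-compressed local net-tree T ∈ LNT(τ, c_p, c_c) with c_r = 2c_c·τ/(τ−4) and τ > 4, if there is a jump from node p^ℓ to node p^h (ℓ ≥ h+2, with no nodes of p strictly between levels h and ℓ), then all leaf points of the subtree rooted at p^h lie in the open ball B(p, c_r·τ^h/2), and no point of P lies in the annulus B(p, c_r·τ^(ℓ−1)/2) \ B(p, c_r·τ^h/2). -/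
/-- In a semi-compressed local net-tree with `c_r = 2c_c·τ/(τ-4)` and `τ > 4`, a jump
from `p^ℓ` to `p^h` (with `ℓ ≥ h + 2`) yields an empty annulus: all leaf points `Q` of the
subtree rooted at `p^h` lie in the open ball `B(p, c_r·τ^h/2)`, and no point of `P` lies in
`B(p, c_r·τ^(ℓ-1)/2) \ B(p, c_r·τ^h/2)`.  The hypotheses record the covering bound for the
subtree and, for each `q ∈ P \ Q`, its ancestor `anc q` at level `ℓ-1`, which covers `q`
and (by semi-compression, since `p^(ℓ-1)` is not in the tree) is far from `p`. -/
theorem jump_empty_annulus {M : Type*} [MetricSpace M]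
    (τ c_c c_r : ℝ) (hτ : 4 < τ) (hcc : 0 < c_c)
    (hcr : c_r = 2 * c_c * τ / (τ - 4))
    (P Q : Set M) (hQP : Q ⊆ P) (p : M) (h ℓ : ℤ) (hjump : h + 2 ≤ ℓ)
    (hcov : ∀ x ∈ Q, dist p x ≤ (c_c * τ / (τ - 1)) * τ ^ h)
    (anc : M → M)
    (hanc : ∀ q ∈ P, q ∉ Q →
      dist (anc q) q ≤ (c_c * τ / (τ - 1)) * τ ^ (ℓ - 1) ∧
      c_r * τ ^ (ℓ - 1) < dist p (anc q)) :
    (∀ x ∈ Q, dist p x < c_r * τ ^ h / 2) ∧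
    (∀ q ∈ P, dist p q < c_r * τ ^ (ℓ - 1) / 2 → dist p q < c_r * τ ^ h / 2) := by

  have hτ0 : (0:ℝ) < τ := by linarith
  have hτ1 : (0:ℝ) < τ - 1 := by linarith
  have hτ4 : (0:ℝ) < τ - 4 := by linarith
  have hzh : (0:ℝ) < τ ^ h := zpow_pos hτ0 h
  have hzl : (0:ℝ) < τ ^ (ℓ - 1) := zpow_pos hτ0 (ℓ - 1)
  have hcr2 : c_r / 2 = c_c * τ / (τ - 4) := by rw [hcr]; ring
  have key : c_c * τ / (τ - 1) < c_r / 2 := by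
    rw [hcr2]
    apply div_lt_div_of_pos_left (by positivity) hτ4 (by linarith)
  have hQball : ∀ x ∈ Q, dist p x < c_r * τ ^ h / 2 := by
    intro x hx
    have := hcov x hx
    have h2 : (c_c * τ / (τ - 1)) * τ ^ h < (c_r / 2) * τ ^ h :=
      mul_lt_mul_of_pos_right key hzh
    calc dist p x ≤ (c_c * τ / (τ - 1)) * τ ^ h := this
      _ < (c_r / 2) * τ ^ h := h2
      _ = c_r * τ ^ h / 2 := by ring
  refine ⟨hQball, fun q hq hlt => ?_⟩
  by_cases hqQ : q ∈ Q
  · exact hQball q hqQ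
  · exfalso
    obtain ⟨h1, h2⟩ := hanc q hq hqQ
    have htri : dist p (anc q) ≤ dist p q + dist (anc q) q := by
      rw [dist_comm (anc q) q]; exact dist_triangle p q (anc q)
    have h3 : (c_c * τ / (τ - 1)) * τ ^ (ℓ - 1) < (c_r / 2) * τ ^ (ℓ - 1) :=
      mul_lt_mul_of_pos_right key hzl
    nlinarith [hlt, h1, h2, htri]
end

section
/- Let p_1, …, p_n be a uniformly random permutation of n distinct points in a metric space and fix a point p_i. The expected number of indices j < i such that p_j is the unique nearest neighbor of p_i in {p_1, …, p_j} (equivalently, d(p_i, {p_1,…,p_j}) < d(p_i, {p_1,…,p_{j−1}})) is at most H_n = Σ_{j=1}^{n} 1/j = O(log n). -/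
/-- Backwards analysis for nearest neighbors.  Let `pts (σ 0), …, pts (σ (n-1))` be a
uniformly random permutation of `n` distinct points and fix an index `i`.  The expected
number of positions `j < i` such that the `j`-th point is the unique nearest neighbor of
the `i`-th point among the first `j+1` points is at most `H_n = Σ_{j=1}^n 1/j`; stated
without division by `n!`: the total count over all permutations is at most `n! · H_n`. -/
theorem expected_nn_changes {n : ℕ} {M : Type*} [MetricSpace M]
    (pts : Fin n → M) (hinj : Function.Injective pts) (i : Fin n) :
    ∑ σ : Equiv.Perm (Fin n),
      (({j : Fin n | j < i ∧ ∀ k : Fin n, k < j →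
          dist (pts (σ i)) (pts (σ j)) < dist (pts (σ i)) (pts (σ k))}).ncard : ℝ)
      ≤ (n.factorial : ℝ) * ∑ m ∈ Finset.range n, (1 : ℝ) / (m + 1) := by
  classical
  set P : Equiv.Perm (Fin n) → Fin n → Prop := fun σ j =>
    ∀ k : Fin n, k < j → dist (pts (σ i)) (pts (σ j)) < dist (pts (σ i)) (pts (σ k))
    with hPdef
  -- Key combinatorial bound via an injection (σ, k) ↦ σ * swap j k
  have key : ∀ j : Fin n, j < i →
      (Finset.univ.filter (fun σ : Equiv.Perm (Fin n) => P σ j)).card * ((j : ℕ) + 1)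
        ≤ n.factorial := by
    intro j hj
    have hswap : ∀ a b : Fin n, a ≤ j → b ≤ j → Equiv.swap j a b ≤ j := by
      intro a b ha hb
      rcases eq_or_ne b j with h | h
      · simpa [h, Equiv.swap_apply_left] using ha
      rcases eq_or_ne b a with h' | h'
      · simp [h', Equiv.swap_apply_right]
      · rw [Equiv.swap_apply_of_ne_of_ne h h']; exact hb
    have hcard : ((Finset.univ.filter (fun σ : Equiv.Perm (Fin n) => P σ j))
          ×ˢ Finset.Iic j).card
        ≤ (Finset.univ : Finset (Equiv.Perm (Fin n))).card := by
      apply Finset.card_le_card_of_injOn (fun p => p.1 * Equiv.swap j p.2)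
      · intro p _; exact Finset.mem_univ _
      · rintro ⟨σ₁, k₁⟩ h₁ ⟨σ₂, k₂⟩ h₂ heq
        simp only [Finset.mem_coe, Finset.mem_product, Finset.mem_filter,
          Finset.mem_univ, true_and, Finset.mem_Iic] at h₁ h₂
        obtain ⟨hP₁, hk₁⟩ := h₁
        obtain ⟨hP₂, hk₂⟩ := h₂
        simp only at heq
        have hji : j ≠ i := ne_of_lt hj
        have hk₁i : k₁ ≠ i := ne_of_lt (lt_of_le_of_lt hk₁ hj)
        have hk₂i : k₂ ≠ i := ne_of_lt (lt_of_le_of_lt hk₂ hj)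
        -- the two permutations agree at position i
        have hτi : σ₁ i = σ₂ i := by
          have h1 : (σ₁ * Equiv.swap j k₁) i = σ₁ i := by
            simp [Equiv.Perm.mul_apply,
              Equiv.swap_apply_of_ne_of_ne hji.symm hk₁i.symm]
          have h2 : (σ₂ * Equiv.swap j k₂) i = σ₂ i := by
            simp [Equiv.Perm.mul_apply,
              Equiv.swap_apply_of_ne_of_ne hji.symm hk₂i.symm]
          rw [← h1, ← h2, heq]
        -- expressing σ₂ j inside σ₁ '' Iic j and vice versa
        have hs2 : σ₂ j = σ₁ (Equiv.swap j k₁ k₂) := by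
          have : (σ₂ * Equiv.swap j k₂) k₂ = σ₂ j := by
            simp [Equiv.Perm.mul_apply, Equiv.swap_apply_right]
          rw [← this, ← heq]; simp [Equiv.Perm.mul_apply]
        have hs1 : σ₁ j = σ₂ (Equiv.swap j k₂ k₁) := by
          have : (σ₁ * Equiv.swap j k₁) k₁ = σ₁ j := by
            simp [Equiv.Perm.mul_apply, Equiv.swap_apply_right]
          rw [← this, heq]; simp [Equiv.Perm.mul_apply]
        -- the unique nearest neighbor forces σ₁ j = σ₂ j
        have hjj : σ₁ j = σ₂ j := by
          by_contra hne
          set m₁ := Equiv.swap j k₁ k₂ with hm₁def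
          set m₂ := Equiv.swap j k₂ k₁ with hm₂def
          have hm₁le : m₁ ≤ j := hswap k₁ k₂ hk₁ hk₂
          have hm₂le : m₂ ≤ j := hswap k₂ k₁ hk₂ hk₁
          have hm₁lt : m₁ < j := by
            refine lt_of_le_of_ne hm₁le fun h => hne ?_
            rw [hs2, h]
          have hm₂lt : m₂ < j := by
            refine lt_of_le_of_ne hm₂le fun h => hne ?_
            rw [hs1, h]
          have h1 := hP₁ m₁ hm₁lt
          have h2 := hP₂ m₂ hm₂lt
          rw [← hs2] at h1
          rw [← hs1] at h2
          rw [hτi] at h1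
          linarith
        -- conclude k₁ = k₂ and σ₁ = σ₂
        have hks : k₁ = k₂ := by
          have e1 : (σ₁ * Equiv.swap j k₁) k₁ = σ₁ j := by
            simp [Equiv.Perm.mul_apply, Equiv.swap_apply_right]
          have e2 : (σ₁ * Equiv.swap j k₁) k₂ = σ₁ j := by
            rw [heq]
            simp [Equiv.Perm.mul_apply, Equiv.swap_apply_right, ← hjj]
          exact (σ₁ * Equiv.swap j k₁).injective (e1.trans e2.symm)
        have hσ : σ₁ = σ₂ := by
          have := heq
          rw [hks] at this
          exact mul_right_cancel this
        exact Prod.ext hσ hks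
    rw [Finset.card_product, Fin.card_Iic, Finset.card_univ, Fintype.card_perm,
      Fintype.card_fin] at hcard
    exact hcard
  -- rewrite each ncard as a filter card
  have step1 : ∀ σ : Equiv.Perm (Fin n),
      ({j : Fin n | j < i ∧ P σ j}).ncard
        = (Finset.univ.filter (fun j => j < i ∧ P σ j)).card := by
    intro σ
    rw [Set.ncard_eq_toFinset_card']
    congr 1
    ext j
    simp
  calc ∑ σ : Equiv.Perm (Fin n), (({j : Fin n | j < i ∧ P σ j}).ncard : ℝ)
      = ∑ σ : Equiv.Perm (Fin n), ∑ j : Fin n,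
          (if j < i ∧ P σ j then (1 : ℝ) else 0) := by
        refine Finset.sum_congr rfl fun σ _ => ?_
        rw [step1 σ, Finset.sum_boole]
    _ = ∑ j : Fin n, ∑ σ : Equiv.Perm (Fin n),
          (if j < i ∧ P σ j then (1 : ℝ) else 0) := Finset.sum_comm
    _ ≤ ∑ j : Fin n, (n.factorial : ℝ) / ((j : ℕ) + 1) := by
        refine Finset.sum_le_sum fun j _ => ?_
        by_cases hj : j < i
        · simp only [hj, true_and]
          rw [Finset.sum_boole, le_div_iff₀ (by positivity)]
          exact_mod_cast key j hj
        · simp only [hj, false_and, if_false, Finset.sum_const_zero]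
          positivity
    _ = (n.factorial : ℝ) * ∑ m ∈ Finset.range n, (1 : ℝ) / (m + 1) := by
        rw [Fin.sum_univ_eq_sum_range (fun m => (n.factorial : ℝ) / (m + 1)),
          Finset.mul_sum]
        exact Finset.sum_congr rfl fun m _ => by rw [mul_one_div]
end

section
/- Fix a point p_i and a uniformly random permutation p_1, …, p_n of the remaining points. A split-below event E_{i,j} occurs if there exists a bunch B near p_i in P_j (for fixed constants α, β) such that p_j is the unique farthest point in B from the first-inserted point of B. If the number of bunches near p_i in any prefix is at most d, then Σ_{j=1}^{n} Pr[E_{i,j}] ≤ 2d·H_n = O(d·log n). -/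
/-- `B ⊆ Pj` is a bunch near `pi` with center `x ∈ B` (parameters `α`, `β`, `τ`). -/
def IsBunch {M : Type*} [MetricSpace M] (Pj : Set M) (pi : M) (α β τ : ℝ)
    (B : Set M) (x : M) : Prop :=
  x ∈ B ∧
  B = Metric.closedBall x (α * dist pi x) ∩ Pj ∧
  (∀ y ∈ Pj, dist x y ≤ β * dist pi x → dist x y ≤ α * dist pi x) ∧
  dist pi x ≤ (2 * τ * (τ - 1) / (τ + 2)) * Metric.infDist pi Pj

/-- The prefix `P_j` of the permutation `σ`: points at positions `≤ j`. -/
def prefixSet {n : ℕ} {M : Type*} (pts : Fin n → M) (σ : Equiv.Perm (Fin n))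
    (j : Fin n) : Set M :=
  {y | ∃ t : Fin n, t ≤ j ∧ y = pts (σ t)}

/-- Split-below event `E_{i,j}`: there is a bunch `B` near the fixed point `q` in the
prefix `P_j` such that the point inserted at time `j` lies in `B` and is the unique
farthest point of `B` from the first-inserted point of `B`. -/
def SplitBelowEvent {n : ℕ} {M : Type*} [MetricSpace M] (pts : Fin n → M) (q : M)
    (α β τ : ℝ) (σ : Equiv.Perm (Fin n)) (j : Fin n) : Prop :=
  ∃ (B : Set M) (x : M), IsBunch (prefixSet pts σ j) q α β τ B x ∧
    pts (σ j) ∈ B ∧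
    ∃ t0 : Fin n, t0 ≤ j ∧ pts (σ t0) ∈ B ∧
      (∀ t : Fin n, t ≤ j → pts (σ t) ∈ B → t0 ≤ t) ∧
      ∀ y ∈ B, y ≠ pts (σ j) → dist (pts (σ t0)) y < dist (pts (σ t0)) (pts (σ j))


/-!
Fix `j`. Right multiplication of `σ` by a permutation `π` of the positions `0, …, j` leaves the
prefix `P_j`, hence its bunches, unchanged, so it suffices to average over such `π`. For a bunch
whose points carry the labels `S`, the label at the last position `j` is any given `u ∈ S` with
probability `1/(j+1)`, and given that, the first label of `S` is uniform among the other
`|S| - 1` (a swap argument). Since a candidate first point `v` has at most one unique farthest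
point, the bunch triggers the event with probability at most `|S|/((j+1)(|S|-1)) ≤ 2/(j+1)` when
`|S| ≥ 2`, and at most `|S|/(j+1)` otherwise. Summing over the at most `d` bunches and over `j`
gives `2d·H_n`.
-/

open Finset Equiv

namespace Subgroup

variable {G : Type*} [Group G] [Fintype G] (H : Subgroup G) [DecidablePred (· ∈ H)]
  (p : G → Prop) [DecidablePred p]

lemma card_filter_mul_left_eq {g : G} (hg : g ∈ H) :
    #{h | h ∈ H ∧ p (g * h)} = #{h | h ∈ H ∧ p h} :=
  card_equiv (Equiv.mulLeft g) fun h => by simp [H.mul_mem_cancel_left hg]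

lemma sum_card_filter_mul_right_eq :
    ∑ σ, #{h | h ∈ H ∧ p (σ * h)} = #{h | h ∈ H} * #{σ | p σ} := by
  simp_rw [← filter_filter, card_filter (fun h => p (_ * h)), card_filter p]
  rw [sum_comm, ← smul_eq_mul, ← sum_const]
  exact sum_congr rfl fun h _ => Equiv.sum_comp (Equiv.mulRight h) fun σ => if p σ then 1 else 0

end Subgroup

open scoped Classical

section PrefixPerms

variable {n : ℕ}

abbrev prefixPerms (j : Fin n) : Subgroup (Perm (Fin n)) :=
  fixingSubgroup (Perm (Fin n)) (Set.Ioi j)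

variable {j : Fin n} {π : Perm (Fin n)}

lemma mem_prefixPerms : π ∈ prefixPerms j ↔ ∀ t, j < t → π t = t := by
  simp [mem_fixingSubgroup_iff, Perm.smul_def]

lemma apply_le_of_mem_prefixPerms (hπ : π ∈ prefixPerms j) {t : Fin n} (ht : t ≤ j) :
    π t ≤ j := by
  by_contra! h
  rw [π.injective (mem_prefixPerms.1 hπ _ h)] at h
  exact h.not_ge ht

lemma swap_mem_prefixPerms {a b : Fin n} (ha : a ≤ j) (hb : b ≤ j) :
    swap a b ∈ prefixPerms j :=
  mem_prefixPerms.2 fun _ ht => swap_apply_of_ne_of_ne (ha.trans_lt ht).ne' (hb.trans_lt ht).ne'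

lemma card_prefixPerms_apply_eq_mul {u : Fin n} (hu : u ≤ j) :
    #{π | π ∈ prefixPerms j ∧ π j = u} * (j + 1) = #{π | π ∈ prefixPerms j} := by
  have hfiber : ∀ v ∈ Iic j, #{π | π ∈ prefixPerms j ∧ π j = v} =
      #{π | π ∈ prefixPerms j ∧ π j = u} := by
    intro v hv
    rw [← (prefixPerms j).card_filter_mul_left_eq _ (swap_mem_prefixPerms (mem_Iic.1 hv) hu)]
    simp [swap_apply_eq_iff]
  rw [card_eq_sum_card_fiberwise (f := fun π => π j) (t := Iic j)
    (fun π hπ => mem_Iic.2 (apply_le_of_mem_prefixPerms (mem_filter.1 hπ).2 le_rfl))]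
  simp only [filter_filter]
  rw [sum_congr rfl hfiber, sum_const, Fin.card_Iic, smul_eq_mul, mul_comm]

lemma card_prefixPerms_apply_mem_mul_le {S : Finset (Fin n)} (hS : ∀ s ∈ S, s ≤ j) :
    #{π | π ∈ prefixPerms j ∧ π j ∈ S} * (j + 1) ≤ #S * #{π | π ∈ prefixPerms j} := by
  rw [card_eq_sum_card_fiberwise (f := fun π => π j) (t := S) fun π hπ => (mem_filter.1 hπ).2.2,
    sum_mul, ← smul_eq_mul, ← sum_const]
  refine sum_le_sum fun u hu => ?_
  rw [← card_prefixPerms_apply_eq_mul (hS u hu)]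
  gcongr
  intro π
  simp +contextual

end PrefixPerms

section FirstIn

variable {α : Type*} [LinearOrder α] {π g : Perm α} {S : Finset α} {a b v : α}

-- `π` puts the label `π t` at position `t`, so `v` sits at position `π⁻¹ v`.
def IsFirstIn (π : Perm α) (S : Finset α) (v : α) : Prop :=
  v ∈ S ∧ ∀ s ∈ S, π⁻¹ v ≤ π⁻¹ s

lemma IsFirstIn.eq (ha : IsFirstIn π S a) (hb : IsFirstIn π S b) : a = b :=
  π⁻¹.injective (le_antisymm (ha.2 b hb.1) (hb.2 a ha.1))

lemma isFirstIn_mul_iff (hg : ∀ s, g s ∈ S ↔ s ∈ S) :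
    IsFirstIn (g * π) S (g v) ↔ IsFirstIn π S v := by
  have hinv : ∀ s, (g * π)⁻¹ s = π⁻¹ (g⁻¹ s) := fun _ => rfl
  simp only [IsFirstIn, hg, hinv, Perm.coe_inv, symm_apply_apply]
  refine and_congr_right fun _ => ⟨fun h s hs => ?_, fun h s hs => h _ ((hg _).1 ?_)⟩
  · simpa using h (g s) ((hg s).2 hs)
  · simpa using hs

lemma isFirstIn_swap_mul_iff (ha : a ∈ S) (hb : b ∈ S) :
    IsFirstIn (swap a b * π) S (swap a b v) ↔ IsFirstIn π S v :=
  isFirstIn_mul_iff fun s => by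
    rcases eq_or_ne s a with rfl | hsa
    · simp [ha, hb]
    rcases eq_or_ne s b with rfl | hsb
    · simp [ha, hb]
    rw [swap_apply_of_ne_of_ne hsa hsb]

end FirstIn

section FirstInPrefix

variable {n : ℕ} {j u v : Fin n} {S : Finset (Fin n)}

lemma IsFirstIn.apply_ne_of_one_lt_card {π : Perm (Fin n)} (hπ : π ∈ prefixPerms j)
    (hS : ∀ s ∈ S, s ≤ j) (hcard : 1 < #S) (hv : IsFirstIn π S v) : π j ≠ v := by
  intro hjv
  obtain ⟨s, hs, hsv⟩ := exists_mem_ne hcard v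
  have hvj : π⁻¹ v = j := by simp [← hjv]
  have hsj : π⁻¹ s ≤ j := apply_le_of_mem_prefixPerms (inv_mem hπ) (hS s hs)
  exact hsv (π⁻¹.injective (le_antisymm (hsj.trans hvj.ge) (hv.2 s hs)))

lemma card_apply_eq_isFirstIn_eq (hS : ∀ s ∈ S, s ≤ j) {v' : Fin n} (hv : v ∈ S)
    (hv' : v' ∈ S) (huv : u ≠ v) (huv' : u ≠ v') :
    #{π | π ∈ prefixPerms j ∧ π j = u ∧ IsFirstIn π S v} =
      #{π | π ∈ prefixPerms j ∧ π j = u ∧ IsFirstIn π S v'} := by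
  rw [← (prefixPerms j).card_filter_mul_left_eq _ (swap_mem_prefixPerms (hS v hv) (hS v' hv'))]
  refine congrArg card (filter_congr fun π _ => and_congr_right fun _ => ?_)
  have hfirst := isFirstIn_swap_mul_iff (π := π) (v := v') hv hv'
  rw [swap_apply_right] at hfirst
  rw [Perm.mul_apply, swap_apply_eq_iff, swap_apply_of_ne_of_ne huv huv', hfirst]

lemma card_apply_eq_isFirstIn_mul_le (hS : ∀ s ∈ S, s ≤ j) (hu : u ∈ S) (hv : v ∈ S) :
    #{π | π ∈ prefixPerms j ∧ π j = u ∧ IsFirstIn π S v} * (#S - 1) ≤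
      #{π | π ∈ prefixPerms j ∧ π j = u} := by
  rcases eq_or_ne u v with rfl | huv
  · rcases le_or_gt #S 1 with h1 | h1
    · simp [Nat.sub_eq_zero_of_le h1]
    · rw [card_eq_zero.2 (filter_eq_empty_iff.2 fun π _ ⟨hπ, hju, hf⟩ =>
        hf.apply_ne_of_one_lt_card hπ hS h1 hju)]
      simp
  calc _ = ∑ v' ∈ S.erase u, #{π | π ∈ prefixPerms j ∧ π j = u ∧ IsFirstIn π S v'} := by
        rw [sum_congr rfl fun v' hv' => card_apply_eq_isFirstIn_eq hS (mem_erase.1 hv').2 hv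
          (mem_erase.1 hv').1.symm huv, sum_const, card_erase_of_mem hu, smul_eq_mul, mul_comm]
    _ = #((S.erase u).biUnion fun v' => {π | π ∈ prefixPerms j ∧ π j = u ∧ IsFirstIn π S v'}) :=
        (card_biUnion fun a _ b _ hab => disjoint_left.2 fun π ha hb =>
          hab ((mem_filter.1 ha).2.2.2.eq (mem_filter.1 hb).2.2.2)).symm
    _ ≤ _ := card_le_card fun π => by simp +contextual

variable {R : Fin n → Fin n → Prop}

lemma card_isFirstIn_rel_apply_mul_le (hS : ∀ s ∈ S, s ≤ j)
    (hR : ∀ v, {u | u ∈ S ∧ R v u}.Subsingleton) (hv : v ∈ S) :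
    #{π | π ∈ prefixPerms j ∧ π j ∈ S ∧ IsFirstIn π S v ∧ R v (π j)} * (#S - 1) * (j + 1) ≤
      #{π | π ∈ prefixPerms j} := by
  by_cases hex : ∃ u ∈ S, R v u
  · obtain ⟨u, hu, hRu⟩ := hex
    calc _ ≤ #{π | π ∈ prefixPerms j ∧ π j = u ∧ IsFirstIn π S v} * (#S - 1) * (j + 1) := by
          gcongr ?_ * _ * _
          refine card_le_card fun π => ?_
          simp only [mem_filter, mem_univ, true_and]
          exact fun ⟨hπ, hjS, hf, hR'⟩ => ⟨hπ, hR v ⟨hjS, hR'⟩ ⟨hu, hRu⟩, hf⟩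
      _ ≤ #{π | π ∈ prefixPerms j ∧ π j = u} * (j + 1) := by
          gcongr
          exact card_apply_eq_isFirstIn_mul_le hS hu hv
      _ = _ := card_prefixPerms_apply_eq_mul (hS u hu)
  · rw [card_eq_zero.2 (filter_eq_empty_iff.2 fun π _ h => hex ⟨π j, h.2.1, h.2.2.2⟩)]
    simp

lemma card_isFirstIn_rel_apply_mul_le_two (hS : ∀ s ∈ S, s ≤ j)
    (hR : ∀ v, {u | u ∈ S ∧ R v u}.Subsingleton) :
    #{π | π ∈ prefixPerms j ∧ π j ∈ S ∧ ∃ v, IsFirstIn π S v ∧ R v (π j)} * (j + 1) ≤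
      2 * #{π | π ∈ prefixPerms j} := by
  set A := #{π | π ∈ prefixPerms j ∧ π j ∈ S ∧ ∃ v, IsFirstIn π S v ∧ R v (π j)}
  set P := #{π | π ∈ prefixPerms j}
  have hlast : A * (j + 1) ≤ #S * P := by
    refine le_trans (Nat.mul_le_mul_right _ (card_le_card fun π => ?_))
      (card_prefixPerms_apply_mem_mul_le hS)
    simp only [mem_filter, mem_univ, true_and]
    exact fun ⟨hπ, hjS, _⟩ => ⟨hπ, hjS⟩
  have hfirst : A * (j + 1) * (#S - 1) ≤ #S * P := by
    calc A * (j + 1) * (#S - 1) = A * (#S - 1) * (j + 1) := by ring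
      _ ≤ (∑ v ∈ S, #{π | π ∈ prefixPerms j ∧ π j ∈ S ∧ IsFirstIn π S v ∧ R v (π j)}) *
            (#S - 1) * (j + 1) := by
          gcongr
          refine (card_le_card fun π => ?_).trans card_biUnion_le
          simp only [mem_filter, mem_univ, true_and, mem_biUnion]
          exact fun ⟨hπ, hjS, v, hf, hR'⟩ => ⟨v, hf.1, hπ, hjS, hf, hR'⟩
      _ = ∑ v ∈ S, #{π | π ∈ prefixPerms j ∧ π j ∈ S ∧ IsFirstIn π S v ∧ R v (π j)} *
            (#S - 1) * (j + 1) := by rw [sum_mul, sum_mul]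
      _ ≤ ∑ v ∈ S, P := sum_le_sum fun v hv => card_isFirstIn_rel_apply_mul_le hS hR hv
      _ = #S * P := by rw [sum_const, smul_eq_mul]
  rcases le_or_gt #S 2 with h2 | h2
  · exact hlast.trans (Nat.mul_le_mul_right _ h2)
  · refine Nat.le_of_mul_le_mul_right (hfirst.trans ?_) (by omega : 0 < #S - 1)
    calc #S * P ≤ 2 * (#S - 1) * P := Nat.mul_le_mul_right _ (by omega)
      _ = 2 * P * (#S - 1) := by ring

end FirstInPrefix

section SplitBelow

variable {n : ℕ} {M : Type*} (pts : Fin n → M) (σ : Perm (Fin n)) {j : Fin n} {π : Perm (Fin n)}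

lemma prefixSet_finite (j : Fin n) : (prefixSet pts σ j).Finite :=
  (Set.finite_range pts).subset fun _ ⟨t, _, ht⟩ => ⟨σ t, ht.symm⟩

lemma prefixSet_mul (hπ : π ∈ prefixPerms j) : prefixSet pts (σ * π) j = prefixSet pts σ j := by
  ext y
  constructor
  · rintro ⟨t, ht, rfl⟩
    exact ⟨π t, apply_le_of_mem_prefixPerms hπ ht, rfl⟩
  · rintro ⟨t, ht, rfl⟩
    exact ⟨π⁻¹ t, apply_le_of_mem_prefixPerms (inv_mem hπ) ht, by simp⟩

variable [MetricSpace M]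

lemma eq_of_forall_dist_lt {B : Set M} {x z₁ z₂ : M} (h₁ : z₁ ∈ B) (h₂ : z₂ ∈ B)
    (hz₁ : ∀ y ∈ B, y ≠ z₁ → dist x y < dist x z₁)
    (hz₂ : ∀ y ∈ B, y ≠ z₂ → dist x y < dist x z₂) : z₁ = z₂ := by
  by_contra h
  exact (hz₁ z₂ h₂ (Ne.symm h)).not_gt (hz₂ z₁ h₁ h)

lemma finite_setOf_isBunch {P : Set M} (hP : P.Finite) (q : M) (α β τ : ℝ) :
    {B | ∃ x, IsBunch P q α β τ B x}.Finite :=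
  hP.finite_subsets.subset fun _ ⟨_, hB⟩ => hB.2.1 ▸ Set.inter_subset_right

lemma SplitBelowEvent.exists_isFirstIn {q : M} {α β τ : ℝ} (hπ : π ∈ prefixPerms j)
    (h : SplitBelowEvent pts q α β τ (σ * π) j) :
    ∃ B, (∃ x, IsBunch (prefixSet pts σ j) q α β τ B x) ∧
      π j ∈ ({t | t ≤ j ∧ pts (σ t) ∈ B} : Finset (Fin n)) ∧
      ∃ v, IsFirstIn π {t | t ≤ j ∧ pts (σ t) ∈ B} v ∧
        ∀ y ∈ B, y ≠ pts (σ (π j)) → dist (pts (σ v)) y < dist (pts (σ v)) (pts (σ (π j))) := by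
  obtain ⟨B, x, hB, hjB, t₀, ht₀j, ht₀B, hmin, hfar⟩ := h
  rw [prefixSet_mul pts σ hπ] at hB
  refine ⟨B, ⟨x, hB⟩, by simpa using ⟨apply_le_of_mem_prefixPerms hπ le_rfl, hjB⟩, π t₀,
    ⟨by simpa using ⟨apply_le_of_mem_prefixPerms hπ ht₀j, ht₀B⟩, fun s hs => ?_⟩, hfar⟩
  simp only [mem_filter, mem_univ, true_and] at hs
  simpa using hmin (π⁻¹ s) (apply_le_of_mem_prefixPerms (inv_mem hπ) hs.1) (by simpa using hs.2)

lemma card_prefixPerms_splitBelowEvent_mul_le (hinj : Function.Injective pts) {q : M}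
    {α β τ : ℝ} {d : ℕ}
    (hd : {B | ∃ x, IsBunch (prefixSet pts σ j) q α β τ B x}.ncard ≤ d) :
    #{π | π ∈ prefixPerms j ∧ SplitBelowEvent pts q α β τ (σ * π) j} * (j + 1) ≤
      2 * d * #{π | π ∈ prefixPerms j} := by
  have hfin := finite_setOf_isBunch (prefixSet_finite pts σ j) q α β τ
  let S : Set M → Finset (Fin n) := fun B => {t | t ≤ j ∧ pts (σ t) ∈ B}
  let R : Set M → Fin n → Fin n → Prop := fun B v u =>
    ∀ y ∈ B, y ≠ pts (σ u) → dist (pts (σ v)) y < dist (pts (σ v)) (pts (σ u))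
  have hR : ∀ B v, {u | u ∈ S B ∧ R B v u}.Subsingleton := fun B v u₁ h₁ u₂ h₂ =>
    σ.injective (hinj (eq_of_forall_dist_lt (mem_filter.1 h₁.1).2.2 (mem_filter.1 h₂.1).2.2
      h₁.2 h₂.2))
  calc _ ≤ (∑ B ∈ hfin.toFinset,
          #{π | π ∈ prefixPerms j ∧ π j ∈ S B ∧ ∃ v, IsFirstIn π (S B) v ∧ R B v (π j)}) *
          (j + 1) := by
        gcongr
        refine (card_le_card fun π => ?_).trans card_biUnion_le
        simp only [mem_filter, mem_univ, true_and, mem_biUnion, Set.Finite.mem_toFinset]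
        rintro ⟨hπ, h⟩
        obtain ⟨B, hB, hjB, v, hv, hfar⟩ := h.exists_isFirstIn pts σ hπ
        exact ⟨B, hB, hπ, hjB, v, hv, hfar⟩
    _ ≤ ∑ _B ∈ hfin.toFinset, 2 * #{π | π ∈ prefixPerms j} := by
        rw [sum_mul]
        exact sum_le_sum fun B _ => card_isFirstIn_rel_apply_mul_le_two
          (fun t ht => (mem_filter.1 ht).2.1) (hR B)
    _ ≤ 2 * d * #{π | π ∈ prefixPerms j} := by
        rw [sum_const, smul_eq_mul, ← Set.ncard_eq_toFinset_card _ hfin, mul_left_comm,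
          mul_assoc]
        gcongr

lemma card_splitBelowEvent_mul_le (hinj : Function.Injective pts) {q : M} {α β τ : ℝ} {d : ℕ}
    (hd : ∀ σ : Perm (Fin n), {B | ∃ x, IsBunch (prefixSet pts σ j) q α β τ B x}.ncard ≤ d) :
    #{σ | SplitBelowEvent pts q α β τ σ j} * (j + 1) ≤ n.factorial * (2 * d) := by
  have hP : 0 < #{π | π ∈ prefixPerms j} := card_pos.2 ⟨1, by simp⟩
  refine Nat.le_of_mul_le_mul_left ?_ hP
  calc #{π | π ∈ prefixPerms j} * (#{σ | SplitBelowEvent pts q α β τ σ j} * (j + 1))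
      = ∑ σ, #{π | π ∈ prefixPerms j ∧ SplitBelowEvent pts q α β τ (σ * π) j} * (j + 1) := by
        rw [← sum_mul, (prefixPerms j).sum_card_filter_mul_right_eq
          (fun σ => SplitBelowEvent pts q α β τ σ j), mul_assoc]
    _ ≤ ∑ _σ : Perm (Fin n), 2 * d * #{π | π ∈ prefixPerms j} :=
        sum_le_sum fun σ _ => card_prefixPerms_splitBelowEvent_mul_le pts σ hinj (hd σ)
    _ = #{π | π ∈ prefixPerms j} * (n.factorial * (2 * d)) := by
        rw [sum_const, card_univ, Fintype.card_perm, Fintype.card_fin, smul_eq_mul]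
        ring

end SplitBelow

theorem expected_split_below_events_general {n : ℕ} {M : Type*} [MetricSpace M]
    (pts : Fin n → M) (hinj : Function.Injective pts)
    (q : M)
    (α β τ : ℝ)
    (d : ℕ)
    (hd : ∀ (σ : Equiv.Perm (Fin n)) (j : Fin n),
      ({B : Set M | ∃ x, IsBunch (prefixSet pts σ j) q α β τ B x}).ncard ≤ d) :
    ∑ σ : Equiv.Perm (Fin n),
      (({j : Fin n | SplitBelowEvent pts q α β τ σ j}).ncard : ℝ)
      ≤ (n.factorial : ℝ) * (2 * d * ∑ m ∈ Finset.range n, (1 : ℝ) / (m + 1)) := by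
  have hswap : ∑ σ : Perm (Fin n), {j | SplitBelowEvent pts q α β τ σ j}.ncard =
      ∑ j, #{σ | SplitBelowEvent pts q α β τ σ j} := by
    simp only [Set.ncard_eq_toFinset_card', Set.toFinset_ofPred]
    exact sum_card_bipartiteAbove_eq_sum_card_bipartiteBelow _
  have hj : ∀ j : Fin n, (#{σ | SplitBelowEvent pts q α β τ σ j} : ℝ) ≤
      n.factorial * (2 * d) * (1 / (j + 1)) := fun j => by
    rw [mul_one_div, le_div_iff₀ (by positivity)]
    exact_mod_cast card_splitBelowEvent_mul_le pts hinj (hd · j)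
  calc ∑ σ : Perm (Fin n), ({j | SplitBelowEvent pts q α β τ σ j}.ncard : ℝ)
      = ∑ j, (#{σ | SplitBelowEvent pts q α β τ σ j} : ℝ) := by exact_mod_cast hswap
    _ ≤ ∑ j : Fin n, n.factorial * (2 * d) * (1 / ((j : ℝ) + 1)) := sum_le_sum fun j _ => hj j
    _ = _ := by
      rw [← mul_sum, Fin.sum_univ_eq_sum_range (fun m => 1 / ((m : ℝ) + 1)), mul_assoc]

/-- If the number of bunches near the fixed point `q` in any prefix is at most `d`, then
the expected number of split-below events is at most `2d·H_n`; stated without division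
by `n!`: the total count over all permutations is at most `n! · 2d · H_n`. -/
theorem expected_split_below_events {n : ℕ} {M : Type*} [MetricSpace M]
    (pts : Fin n → M) (hinj : Function.Injective pts)
    (q : M) (hq : q ∉ Set.range pts)
    (α β τ : ℝ) (hα : 0 < α) (hα2 : α ≤ 1 / 2) (hβ : 2 * α ≤ β)
    (d : ℕ)
    (hd : ∀ (σ : Equiv.Perm (Fin n)) (j : Fin n),
      ({B : Set M | ∃ x, IsBunch (prefixSet pts σ j) q α β τ B x}).ncard ≤ d) :
    ∑ σ : Equiv.Perm (Fin n),
      (({j : Fin n | SplitBelowEvent pts q α β τ σ j}).ncard : ℝ)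
      ≤ (n.factorial : ℝ) * (2 * d * ∑ m ∈ Finset.range n, (1 : ℝ) / (m + 1)) :=
  expected_split_below_events_general pts hinj q α β τ d hd
end

section
/- In the bottom-up propagation of a point p in a local net-tree with parameters (τ, c_p, c_c) and c_r ≥ 2c_c·τ/(τ−2): if at iteration i−1 the node p^(ℓ+i−1) has parent q^(ℓ+i) with d(p, q) ≤ (c_c + c_r/τ)·τ^(ℓ+i), and every node x^m ≠ p^(ℓ+i−1) satisfies d(x, parent(x^m)) ≤ c_c·τ^(m+1), then the new parent of p^(ℓ+i) chosen as the closest node among relatives of parent(q^(ℓ+i)) satisfies d(p^(ℓ+i), parent(p^(ℓ+i))) ≤ (c_r/τ² + c_c/τ + c_c)·τ^(ℓ+i+1) < (c_c + c_r/τ)·τ^(ℓ+i+1) < c_r·τ^(ℓ+i+1). -/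
/-! The new parent `s` is no farther from `p` than `q'`, so the triangle inequality through `q`
gives `d(p, s) ≤ (c_c + c_r/τ)·τ^m + c_c·τ^(m+1) = (c_r/τ² + c_c/τ + c_c)·τ^(m+1)`.
The condition `c_r ≥ 2c_cτ/(τ−2)` is equivalent to `c_c + c_r/τ ≤ c_r/2`, from which both
strict comparisons of the coefficients follow. -/

namespace NetTree

variable {τ c_c c_r : ℝ}

theorem cc_add_cr_div_le_half (hτ : 2 < τ) (hcr : 2 * c_c * τ / (τ - 2) ≤ c_r) :
    c_c + c_r / τ ≤ c_r / 2 := by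
  have hτ0 : 0 < τ := by linarith
  rw [div_le_iff₀ (sub_pos.2 hτ)] at hcr
  have hgap : c_r / 2 - (c_c + c_r / τ) = (c_r * (τ - 2) - 2 * c_c * τ) / (2 * τ) := by
    field_simp
    ring
  have : 0 ≤ c_r / 2 - (c_c + c_r / τ) := by
    rw [hgap]
    exact div_nonneg (by linarith) (by positivity)
  linarith

theorem cr_pos (hτ : 2 < τ) (hcc : 0 < c_c) (hcr : 2 * c_c * τ / (τ - 2) ≤ c_r) : 0 < c_r :=
  (div_pos (by positivity) (sub_pos.2 hτ)).trans_le hcr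

theorem propagation_coeff_lt (hτ : 2 < τ) (hcc : 0 < c_c) (hcr : 2 * c_c * τ / (τ - 2) ≤ c_r) :
    c_r / τ ^ 2 + c_c / τ + c_c < c_c + c_r / τ := by
  have hτ0 : 0 < τ := by linarith
  calc c_r / τ ^ 2 + c_c / τ + c_c = (c_c + c_r / τ) / τ + c_c := by ring
    _ ≤ c_r / 2 / τ + c_c := by gcongr; exact cc_add_cr_div_le_half hτ hcr
    _ < c_r / τ + c_c := by gcongr; linarith [cr_pos hτ hcc hcr]
    _ = c_c + c_r / τ := add_comm _ _

end NetTree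

/-- Bottom-up propagation distance bound.  At iteration `i` (level `m = ℓ + i`), if
`d(p,q) ≤ (c_c + c_r/τ)·τ^m` for the old parent-point `q` of `p`, `q`'s parent `q'`
satisfies the covering bound `d(q,q') ≤ c_c·τ^(m+1)`, and the new parent `s` of
`p^(m)`'s promotion is at least as close to `p` as `q'`, then
`d(p,s) ≤ (c_r/τ² + c_c/τ + c_c)·τ^(m+1) < (c_c + c_r/τ)·τ^(m+1) < c_r·τ^(m+1)`
(for `c_r ≥ 2c_c·τ/(τ-2)` and `τ > 2`). -/
theorem bottom_up_propagation_bound {M : Type*} [MetricSpace M]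
    (τ c_c c_r : ℝ) (hτ : 2 < τ) (hcc : 0 < c_c)
    (hcr : 2 * c_c * τ / (τ - 2) ≤ c_r)
    (p q q' s : M) (m : ℤ)
    (hpq : dist p q ≤ (c_c + c_r / τ) * τ ^ m)
    (hqq' : dist q q' ≤ c_c * τ ^ (m + 1))
    (hs : dist p s ≤ dist p q') :
    dist p s ≤ (c_r / τ ^ 2 + c_c / τ + c_c) * τ ^ (m + 1) ∧
    (c_r / τ ^ 2 + c_c / τ + c_c) * τ ^ (m + 1) < (c_c + c_r / τ) * τ ^ (m + 1) ∧
    (c_c + c_r / τ) * τ ^ (m + 1) < c_r * τ ^ (m + 1) := by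
  have hτ0 : 0 < τ := by linarith
  have hpow : 0 < τ ^ (m + 1) := zpow_pos hτ0 _
  have hlt : c_c + c_r / τ < c_r := by
    linarith [NetTree.cc_add_cr_div_le_half hτ hcr, NetTree.cr_pos hτ hcc hcr]
  refine ⟨?_, mul_lt_mul_of_pos_right (NetTree.propagation_coeff_lt hτ hcc hcr) hpow,
    mul_lt_mul_of_pos_right hlt hpow⟩
  calc dist p s ≤ dist p q + dist q q' := hs.trans (dist_triangle p q q')
    _ ≤ (c_c + c_r / τ) * τ ^ m + c_c * τ ^ (m + 1) := add_le_add hpq hqq'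
    _ = (c_r / τ ^ 2 + c_c / τ + c_c) * τ ^ (m + 1) := by
      rw [zpow_add_one₀ hτ0.ne']
      field_simp
      ring
end

section
/- Suppose c_r = 2c_c·τ/(τ−4) with τ > 4, and in a local net-tree on P_{j−1}, point p_i has center p_k^ℓ. If a newly inserted point p_j (inserted at a level f ∈ {ℓ−1, ℓ, ℓ+1}) touches p_i via a basic touch (which requires d(p_i, p_k) > c_p·τ^(ℓ−1)/2), then d(p_i, p_j) < (24·c_c·τ⁴(τ−1)/(c_p(τ+2)(τ−4)))·d(p_i, P_{j−1}). -/
/-!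
Whichever of the three levels `p_j` is inserted at, the chain of edges joining it to `p_k` has
length at most `2 c_r τ^(ℓ+1)`; with `d(p_i, p_k) ≤ c_r τ^ℓ` this puts `p_j` within
`3 c_r τ^(ℓ+1)` of `p_i`. The outer-cell condition trades the scale `τ^(ℓ+1) = τ² τ^(ℓ-1)` for
`2 τ² d(p_i, p_k) / c_p`, and the ANN bound trades `d(p_i, p_k)` for `d(p_i, P_{j-1})`.
-/

section BasicTouch

variable {M : Type*} [PseudoMetricSpace M] {τ c_c c_r : ℝ} {ℓ : ℤ} {p x y q : M}

lemma dist_le_of_touch_above (hτ : 0 ≤ τ) (hc : c_c ≤ c_r)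
    (hpx : dist p x ≤ c_r * τ ^ (ℓ + 1)) (hxq : dist x q ≤ c_c * τ ^ (ℓ + 1)) :
    dist p q ≤ 2 * c_r * τ ^ (ℓ + 1) := by
  have := mul_le_mul_of_nonneg_right hc (zpow_nonneg hτ (ℓ + 1))
  linarith [dist_triangle p x q]

lemma dist_le_of_touch_below (hτ : 1 ≤ τ) (hcr : 0 ≤ c_r) (hc : 2 * c_c * τ ≤ c_r * (τ - 1))
    (hpx : dist p x ≤ (c_c + c_r / τ) * τ ^ ℓ) (hxq : dist x q ≤ c_r * τ ^ ℓ) :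
    dist p q ≤ 2 * c_r * τ ^ (ℓ + 1) := by
  have hcoef : c_r / τ ≤ 2 * c_r * τ - c_r - c_c := by
    rw [div_le_iff₀ (by linarith)]
    nlinarith [mul_nonneg hcr (sub_nonneg.2 hτ)]
  have := mul_le_mul_of_nonneg_right hcoef (zpow_nonneg (by linarith : 0 ≤ τ) ℓ)
  rw [zpow_add_one₀ (by positivity)]
  nlinarith [dist_triangle p x q]

lemma dist_le_of_touch_same_level (hτ : 1 ≤ τ) (hc : 2 * c_c * τ ≤ c_r * (τ - 1))
    (hpx : dist p x ≤ (c_c + c_r / τ) * τ ^ (ℓ + 1)) (hxy : dist x y ≤ c_r * τ ^ (ℓ + 1))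
    (hyq : dist y q ≤ c_c * τ ^ (ℓ + 1)) :
    dist p q ≤ 2 * c_r * τ ^ (ℓ + 1) := by
  have hτ0 : τ ≠ 0 := by positivity
  have ha : 0 ≤ τ ^ ℓ := zpow_nonneg (by linarith) ℓ
  have hsplit : (c_c + c_r / τ) * τ ^ (ℓ + 1) = c_c * τ ^ (ℓ + 1) + c_r * τ ^ ℓ := by
    rw [zpow_add_one₀ hτ0]; field_simp
  rw [hsplit] at hpx
  rw [zpow_add_one₀ hτ0] at *
  nlinarith [dist_triangle4 p x y q, mul_le_mul_of_nonneg_right hc ha]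

end BasicTouch

lemma dist_lt_of_le_of_outer_cell {M : Type*} [PseudoMetricSpace M] {τ c_p C : ℝ} {ℓ : ℤ}
    {p q k : M} (hτ : 0 < τ) (hcp : 0 < c_p) (hC : 0 < C)
    (hpq : dist p q ≤ C * τ ^ (ℓ + 1)) (houter : c_p * τ ^ (ℓ - 1) / 2 < dist p k) :
    dist p q < 2 * C * τ ^ 2 / c_p * dist p k := by
  have hscale : τ ^ (ℓ + 1) = τ ^ 2 * τ ^ (ℓ - 1) := by
    rw [← zpow_natCast, ← zpow_add₀ hτ.ne']; ring_nf
  rw [hscale] at hpq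
  rw [div_mul_eq_mul_div, lt_div_iff₀ hcp]
  nlinarith [mul_lt_mul_of_pos_left houter (by positivity : 0 < 2 * C * τ ^ 2)]

theorem basic_touch_distance_bound_general {M : Type*} [MetricSpace M]
    (τ c_p c_c c_r : ℝ) (hτ : 4 < τ) (hcp : 0 < c_p)
    (hcr : c_r = 2 * c_c * τ / (τ - 4))
    (Pprev : Set M) (p_i p_k p_j : M) (ℓ f : ℤ)
    (hcen : dist p_i p_k ≤ c_r * τ ^ ℓ)
    (hann : dist p_i p_k < (2 * τ * (τ - 1) / (τ + 2)) * Metric.infDist p_i Pprev)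
    (houter : c_p * τ ^ (ℓ - 1) / 2 < dist p_i p_k)
    (hcase :
      (f = ℓ + 1 ∧ ∃ x : M, dist p_j x ≤ c_r * τ ^ (ℓ + 1) ∧
        dist x p_k ≤ c_c * τ ^ (ℓ + 1)) ∨
      (f = ℓ - 1 ∧ ∃ x : M, dist p_j x ≤ (c_c + c_r / τ) * τ ^ ℓ ∧
        dist x p_k ≤ c_r * τ ^ ℓ) ∨
      (f = ℓ ∧ ∃ x y : M, dist p_j x ≤ (c_c + c_r / τ) * τ ^ (ℓ + 1) ∧
        dist x y ≤ c_r * τ ^ (ℓ + 1) ∧ dist y p_k ≤ c_c * τ ^ (ℓ + 1))) :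
    dist p_i p_j <
      (24 * c_c * τ ^ (4 : ℕ) * (τ - 1) / (c_p * (τ + 2) * (τ - 4))) *
        Metric.infDist p_i Pprev := by
  have hτ0 : 0 < τ := by linarith
  have hcr_pos : 0 < c_r := by
    have : 0 < c_p * τ ^ (ℓ - 1) / 2 := by have := zpow_pos hτ0 (ℓ - 1); positivity
    exact pos_of_mul_pos_left (by linarith) (zpow_pos hτ0 ℓ).le
  have hcc : 2 * c_c * τ ≤ c_r * (τ - 1) := by
    have : c_r * (τ - 4) = 2 * c_c * τ := by rw [hcr]; field_simp [(by linarith : τ - 4 ≠ 0)]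
    linarith
  have hjk : dist p_j p_k ≤ 2 * c_r * τ ^ (ℓ + 1) := by
    rcases hcase with ⟨-, x, hjx, hxk⟩ | ⟨-, x, hjx, hxk⟩ | ⟨-, x, y, hjx, hxy, hyk⟩
    · exact dist_le_of_touch_above hτ0.le (by nlinarith) hjx hxk
    · exact dist_le_of_touch_below (by linarith) hcr_pos.le hcc hjx hxk
    · exact dist_le_of_touch_same_level (by linarith) hcc hjx hxy hyk
  have hij : dist p_i p_j ≤ 3 * c_r * τ ^ (ℓ + 1) := by
    have : τ ^ ℓ ≤ τ ^ (ℓ + 1) := zpow_le_zpow_right₀ (by linarith) (by omega)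
    nlinarith [dist_triangle_right p_i p_j p_k]
  calc dist p_i p_j < 2 * (3 * c_r) * τ ^ 2 / c_p * dist p_i p_k :=
        dist_lt_of_le_of_outer_cell hτ0 hcp (by positivity) hij houter
    _ < 2 * (3 * c_r) * τ ^ 2 / c_p *
          ((2 * τ * (τ - 1) / (τ + 2)) * Metric.infDist p_i Pprev) :=
        mul_lt_mul_of_pos_left hann (by positivity)
    _ = _ := by
        rw [hcr]; field_simp [(by linarith : τ - 4 ≠ 0)]; ring

/-- If `p_j` (inserted at a level `f ∈ {ℓ-1, ℓ, ℓ+1}`) touches `p_i` via a basic touch,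
where `p_k^ℓ` is the center of `p_i` in the already-inserted set `Pprev`, then
`d(p_i, p_j) < (24·c_c·τ⁴(τ-1)/(c_p(τ+2)(τ-4)))·d(p_i, Pprev)`.
Hypotheses: `c_r = 2c_c·τ/(τ-4)` with `τ > 4`; the center bound `d(p_i,p_k) ≤ c_r·τ^ℓ`;
the ANN bound `d(p_i,p_k) < (2τ(τ-1)/(τ+2))·d(p_i,Pprev)`; the outer-cell condition
`d(p_i,p_k) > c_p·τ^(ℓ-1)/2`; and, in each of the three cases for `f`, the chains of
relative/covering edges connecting `p_j` to `p_k` through intermediate nodes. -/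
theorem basic_touch_distance_bound {M : Type*} [MetricSpace M]
    (τ c_p c_c c_r : ℝ) (hτ : 4 < τ) (hcp : 0 < c_p) (hcpc : c_p ≤ c_c)
    (hcr : c_r = 2 * c_c * τ / (τ - 4))
    (Pprev : Set M) (p_i p_k p_j : M) (ℓ f : ℤ)
    (hcen : dist p_i p_k ≤ c_r * τ ^ ℓ)
    (hann : dist p_i p_k < (2 * τ * (τ - 1) / (τ + 2)) * Metric.infDist p_i Pprev)
    (houter : c_p * τ ^ (ℓ - 1) / 2 < dist p_i p_k)
    (hcase :
      (f = ℓ + 1 ∧ ∃ x : M, dist p_j x ≤ c_r * τ ^ (ℓ + 1) ∧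
        dist x p_k ≤ c_c * τ ^ (ℓ + 1)) ∨
      (f = ℓ - 1 ∧ ∃ x : M, dist p_j x ≤ (c_c + c_r / τ) * τ ^ ℓ ∧
        dist x p_k ≤ c_r * τ ^ ℓ) ∨
      (f = ℓ ∧ ∃ x y : M, dist p_j x ≤ (c_c + c_r / τ) * τ ^ (ℓ + 1) ∧
        dist x y ≤ c_r * τ ^ (ℓ + 1) ∧ dist y p_k ≤ c_c * τ ^ (ℓ + 1))) :
    dist p_i p_j <
      (24 * c_c * τ ^ (4 : ℕ) * (τ - 1) / (c_p * (τ + 2) * (τ - 4))) *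
        Metric.infDist p_i Pprev :=
  basic_touch_distance_bound_general τ c_p c_c c_r hτ hcp hcr Pprev p_i p_k p_j ℓ f hcen hann houter
    hcase
end

section
/- In a local net-tree with parameters (τ, c_p, c_c), c_r ≥ 2c_c·τ/(τ−2), and τ > 2: if p^h is newly inserted at level h as a child of parent(q^h) where q^ℓ is the center of p, then for every node s^g with g ≤ h−2 whose parent is at distance more than c_r·τ^(h−1) from p, we have d(p, s) > c_c·((τ+2)/(τ−2))·τ^(h−1) > c_c·τ^(h−1); hence p^h cannot cover (be the parent of) any node at level less than h−1. -/
/-- A newly inserted node `p^h` cannot cover nodes below level `h-1`.  If `s^g` is a node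
with `g ≤ h - 2` whose parent point `pars` satisfies the local covering bound
`d(pars, s) ≤ c_c·τ^(g+1)` and is far from `p` (`d(p, pars) > c_r·τ^(h-1)`, since
otherwise it would have been `p`'s center), then
`d(p,s) > c_c·((τ+2)/(τ-2))·τ^(h-1) > c_c·τ^(h-1)` (for `c_r ≥ 2c_c·τ/(τ-2)`, `τ > 2`). -/
theorem new_node_cannot_cover_below {M : Type*} [MetricSpace M]
    (τ c_c c_r : ℝ) (hτ : 2 < τ) (hcc : 0 < c_c)
    (hcr : 2 * c_c * τ / (τ - 2) ≤ c_r)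
    (p s pars : M) (h g : ℤ) (hg : g ≤ h - 2)
    (hfar : c_r * τ ^ (h - 1) < dist p pars)
    (hcov : dist pars s ≤ c_c * τ ^ (g + 1)) :
    c_c * ((τ + 2) / (τ - 2)) * τ ^ (h - 1) < dist p s ∧
    c_c * τ ^ (h - 1) < c_c * ((τ + 2) / (τ - 2)) * τ ^ (h - 1) := by
  have hτ0 : (0:ℝ) < τ := by linarith
  have hτ2 : (0:ℝ) < τ - 2 := by linarith
  have hpow : (0:ℝ) < τ ^ (h - 1) := zpow_pos hτ0 _
  have hmono : τ ^ (g + 1) ≤ τ ^ (h - 1) :=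
    zpow_le_zpow_right₀ (by linarith) (by omega)
  have hcov' : dist pars s ≤ c_c * τ ^ (h - 1) := by
    refine hcov.trans ?_
    exact mul_le_mul_of_nonneg_left hmono hcc.le
  have hcr' : c_c * ((τ + 2) / (τ - 2)) = 2 * c_c * τ / (τ - 2) - c_c := by
    field_simp; ring
  have htri : dist p pars - dist pars s ≤ dist p s := by
    have := dist_triangle p s pars
    rw [dist_comm s pars] at this
    linarith
  constructor
  · have h1 : c_r * τ ^ (h - 1) - c_c * τ ^ (h - 1) < dist p s := by
      nlinarith
    have h2 : c_c * ((τ + 2) / (τ - 2)) * τ ^ (h - 1)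
        ≤ c_r * τ ^ (h - 1) - c_c * τ ^ (h - 1) := by
      rw [hcr']
      nlinarith
    linarith
  · have : (1:ℝ) < (τ + 2) / (τ - 2) := by
      rw [lt_div_iff₀ hτ2]; linarith
    have h3 := mul_lt_mul_of_pos_right (mul_lt_mul_of_pos_left this hcc) hpow
    rw [mul_one] at h3
    exact h3
end
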